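/- Let n, k, r be integers with k, r ≥ 2 and n ≥ k + r, and let H be a vertex-k-maximal r-uniform hypergraph on n vertices with separation triple (S, H_1, H_2), where n_i = |V(H_i)| for i = 1, 2. Then the number of edges of H intersecting each of V(H_1) − S, S, and V(H_2) − S equals C(n, r) − C(n_1, r) − C(n_2, r) + C(k, r) − C(n − k, r) + C(n_1 − k, r) + C(n_2 − k, r), where C(a, b) denotes the binomial coefficient (equal to 0 when b > a). -/

import Mathlib

/-- A finite hypergraph: a finite vertex set together with a finite set of
non-empty edges, each a subset of the vertex set. -/
structure FinHypergraph where
  verts : Finset ℕ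
  edges : Finset (Finset ℕ)
  edge_sub : ∀ e ∈ edges, e ⊆ verts
  edge_nonempty : ∀ e ∈ edges, e.Nonempty

namespace FinHypergraph

/-- `H` is `r`-uniform if every edge has cardinality `r`. -/
def IsUniform (H : FinHypergraph) (r : ℕ) : Prop := ∀ e ∈ H.edges, e.card = r

/-- `H'` is a subhypergraph of `H`. -/
def IsSub (H' H : FinHypergraph) : Prop := H'.verts ⊆ H.verts ∧ H'.edges ⊆ H.edges

/-- Two vertices are adjacent if some edge contains both. -/
def Adj (H : FinHypergraph) (u v : ℕ) : Prop := ∃ e ∈ H.edges, u ∈ e ∧ v ∈ e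

/-- `H` is connected if every pair of vertices is joined by a path
(equivalently, a walk, i.e. is reachable via the adjacency relation). -/
def Connected (H : FinHypergraph) : Prop :=
  ∀ u ∈ H.verts, ∀ v ∈ H.verts, Relation.ReflTransGen H.Adj u v

/-- The subhypergraph of `H` induced by the vertex set `Y`. -/
def induce (H : FinHypergraph) (Y : Finset ℕ) : FinHypergraph where
  verts := H.verts ∩ Y
  edges := H.edges.filter (fun e => e ⊆ Y)
  edge_sub := by
    intro e he
    simp only [Finset.mem_filter] at he
    exact Finset.subset_inter (H.edge_sub e he.1) he.2
  edge_nonempty := by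
    intro e he
    simp only [Finset.mem_filter] at he
    exact H.edge_nonempty e he.1

/-- `X` is a vertex-cut of `H` if deleting `X` leaves a disconnected hypergraph. -/
def IsVertexCut (H : FinHypergraph) (X : Finset ℕ) : Prop :=
  X ⊆ H.verts ∧ ¬ (H.induce (H.verts \ X)).Connected

open Classical in
/-- The vertex-connectivity of `H`: the minimum cardinality of a vertex-cut if one
exists, and `|V(H)| - 1` otherwise. -/
noncomputable def kappa (H : FinHypergraph) : ℕ :=
  if ∃ X, H.IsVertexCut X then sInf {m | ∃ X, H.IsVertexCut X ∧ X.card = m}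
  else H.verts.card - 1

/-- `κ̄(H)`: the maximum vertex-connectivity over all subhypergraphs of `H`. -/
noncomputable def kappaBar (H : FinHypergraph) : ℕ :=
  sSup {m | ∃ H' : FinHypergraph, H'.IsSub H ∧ H'.kappa = m}

/-- `H + e`: add the edge `e` (a non-empty subset of the vertices) to `H`. -/
def addEdge (H : FinHypergraph) (e : Finset ℕ) : FinHypergraph where
  verts := H.verts
  edges := if e ⊆ H.verts ∧ e.Nonempty then insert e H.edges else H.edges
  edge_sub := by
    intro f hf
    split at hf
    · rcases Finset.mem_insert.mp hf with rfl | hf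
      · exact (by assumption : f ⊆ H.verts ∧ f.Nonempty).1
      · exact H.edge_sub f hf
    · exact H.edge_sub f hf
  edge_nonempty := by
    intro f hf
    split at hf
    · rcases Finset.mem_insert.mp hf with rfl | hf
      · exact (by assumption : f ⊆ H.verts ∧ f.Nonempty).2
      · exact H.edge_nonempty f hf
    · exact H.edge_nonempty f hf

/-- `H + F`: add a set `F` of edges to `H`. -/
def addEdges (H : FinHypergraph) (F : Finset (Finset ℕ)) : FinHypergraph where
  verts := H.verts
  edges := H.edges ∪ F.filter (fun e => e ⊆ H.verts ∧ e.Nonempty)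
  edge_sub := by
    intro f hf
    rcases Finset.mem_union.mp hf with hf | hf
    · exact H.edge_sub f hf
    · exact (Finset.mem_filter.mp hf).2.1
  edge_nonempty := by
    intro f hf
    rcases Finset.mem_union.mp hf with hf | hf
    · exact H.edge_nonempty f hf
    · exact (Finset.mem_filter.mp hf).2.2

/-- `H` is vertex-`k`-maximal (as an `r`-uniform hypergraph): `κ̄(H) ≤ k`, but adding
any edge of the complement `H^c` creates a subhypergraph of connectivity at least `k + 1`. -/
def VertexKMaximal (H : FinHypergraph) (r k : ℕ) : Prop :=
  H.IsUniform r ∧ H.kappaBar ≤ k ∧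
    ∀ e : Finset ℕ, e ⊆ H.verts → e.card = r → e ∉ H.edges →
      k + 1 ≤ (H.addEdge e).kappaBar

/-- The complete `r`-uniform hypergraph on the vertex set `V`. -/
def completeHG (V : Finset ℕ) (r : ℕ) : FinHypergraph where
  verts := V
  edges := (V.powersetCard r).filter (fun e => e.Nonempty)
  edge_sub := by
    intro e he
    simp only [Finset.mem_filter, Finset.mem_powersetCard] at he
    exact he.1.1
  edge_nonempty := by
    intro e he
    exact (Finset.mem_filter.mp he).2

/-- The hypergraph on vertex set `V` with no edges. -/
def emptyHG (V : Finset ℕ) : FinHypergraph where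
  verts := V
  edges := ∅
  edge_sub := by simp
  edge_nonempty := by simp

/-- The `r`-join `H₁ ∨_r H₂`: the union of `H₁` and `H₂` together with all
`r`-element subsets of `V(H₁) ∪ V(H₂)` meeting both `V(H₁)` and `V(H₂)`. -/
def rJoin (H1 H2 : FinHypergraph) (r : ℕ) : FinHypergraph where
  verts := H1.verts ∪ H2.verts
  edges := H1.edges ∪ H2.edges ∪
    ((H1.verts ∪ H2.verts).powersetCard r).filter
      (fun e => (e ∩ H1.verts).Nonempty ∧ (e ∩ H2.verts).Nonempty)
  edge_sub := by
    intro e he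
    rcases Finset.mem_union.mp he with he | he
    · rcases Finset.mem_union.mp he with he | he
      · exact (H1.edge_sub e he).trans Finset.subset_union_left
      · exact (H2.edge_sub e he).trans Finset.subset_union_right
    · exact (Finset.mem_powersetCard.mp (Finset.mem_filter.mp he).1).1
  edge_nonempty := by
    intro e he
    rcases Finset.mem_union.mp he with he | he
    · rcases Finset.mem_union.mp he with he | he
      · exact H1.edge_nonempty e he
      · exact H2.edge_nonempty e he
    · obtain ⟨x, hx⟩ := (Finset.mem_filter.mp he).2.1
      exact ⟨x, (Finset.mem_inter.mp hx).1⟩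

/-- The union of two hypergraphs. -/
def hUnion (H1 H2 : FinHypergraph) : FinHypergraph where
  verts := H1.verts ∪ H2.verts
  edges := H1.edges ∪ H2.edges
  edge_sub := by
    intro e he
    rcases Finset.mem_union.mp he with he | he
    · exact (H1.edge_sub e he).trans Finset.subset_union_left
    · exact (H2.edge_sub e he).trans Finset.subset_union_right
  edge_nonempty := by
    intro e he
    rcases Finset.mem_union.mp he with he | he
    · exact H1.edge_nonempty e he
    · exact H2.edge_nonempty e he

/-- The union of the hypergraphs `f 0, …, f (m-1)`. -/
def unionOver (m : ℕ) (f : ℕ → FinHypergraph) : FinHypergraph where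
  verts := (Finset.range m).biUnion (fun i => (f i).verts)
  edges := (Finset.range m).biUnion (fun i => (f i).edges)
  edge_sub := by
    intro e he
    obtain ⟨i, hi, hei⟩ := Finset.mem_biUnion.mp he
    exact ((f i).edge_sub e hei).trans (Finset.subset_biUnion_of_mem (fun i => (f i).verts) hi)
  edge_nonempty := by
    intro e he
    obtain ⟨i, _, hei⟩ := Finset.mem_biUnion.mp he
    exact (f i).edge_nonempty e hei

/-- `C` is a component of `G`: a maximal connected subhypergraph. -/
def IsComponent (G C : FinHypergraph) : Prop :=
  C.IsSub G ∧ C.Connected ∧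
    ∀ C' : FinHypergraph, C'.IsSub G → C'.Connected → C.IsSub C' → C' = C

/-- `(S, H₁, H₂)` is a separation triple of `H`: `S` is a minimum vertex-cut,
`H₁ = H[S ∪ V(C₁)]` and `H₂ = H[S ∪ V(C₂)]`, where `C₁` is a component of `H - S`
and `C₂ = H - (S ∪ V(C₁))`. -/
def IsSeparationTriple (H : FinHypergraph) (S : Finset ℕ) (H1 H2 : FinHypergraph) : Prop :=
  H.IsVertexCut S ∧ (∀ X : Finset ℕ, H.IsVertexCut X → S.card ≤ X.card) ∧
    ∃ C1 : FinHypergraph, IsComponent (H.induce (H.verts \ S)) C1 ∧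
      H1 = H.induce (S ∪ C1.verts) ∧
      H2 = H.induce (S ∪ (H.verts \ (S ∪ C1.verts)))

end FinHypergraph

/-! Put `P = V(H₁) - S` and `Q = V(H₂) - S`: every edge of `H` that misses `S` lies inside `P`
or inside `Q`. As `S` is a minimum cut, `|S| = κ(H) ≤ κ̄(H) ≤ k`. By maximality, adding a non-edge `e` to `H` creates a subhypergraph `H'` with
`κ(H') ≥ k + 1` that contains `e`. If `e` meets `P`, `S` and `Q`, then `S ∩ V(H')` already
separates `H'`, a cut of size at most `|S| ≤ k`; so every such `r`-set is an edge of `H`. If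
`|S| < k`, take `e ⊆ P ∪ Q` meeting both sides in `p` and `q`: deleting `S ∩ V(H')` together
with `p` (or `q`) separates any further vertex of `H'` in `P` (or `Q`), so `|V(H')| ≤ |S| + 2`,
which is too small; hence `|S| = k`. What remains is to count the `r`-subsets of `S ∪ P ∪ Q`
meeting all three parts, by inclusion–exclusion over the three unions of two parts. -/

open Finset

namespace Finset

variable {α : Type*} [DecidableEq α]

lemma card_sdiff_union_union {U A B C : Finset α} (h : A ∪ B ∪ C ⊆ U) :
    ((U \ (A ∪ B ∪ C)).card : ℤ) = U.card - A.card - B.card - C.card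
      + (A ∩ B).card + (A ∩ C).card + (B ∩ C).card - (A ∩ B ∩ C).card := by
  have hU := card_sdiff_add_card_eq_card h
  have hABC := card_union_add_card_inter (A ∪ B) C
  have hAB := card_union_add_card_inter A B
  have hAC_BC := card_union_add_card_inter (A ∩ C) (B ∩ C)
  rw [union_inter_distrib_right] at hABC
  rw [show A ∩ C ∩ (B ∩ C) = A ∩ B ∩ C by ext; simp only [mem_inter]; tauto] at hAC_BC
  omega

lemma powersetCard_inter (r : ℕ) (s t : Finset α) :
    powersetCard r s ∩ powersetCard r t = powersetCard r (s ∩ t) := by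
  ext e
  simp only [mem_inter, mem_powersetCard, subset_inter_iff]
  tauto

lemma inter_nonempty_iff_not_subset {e X Y : Finset α} (he : e ⊆ X ∪ Y) (hXY : Disjoint X Y) :
    (e ∩ X).Nonempty ↔ ¬ e ⊆ Y := by
  constructor
  · rintro ⟨x, hx⟩ heY
    exact disjoint_left.1 hXY (mem_inter.1 hx).2 (heY (mem_inter.1 hx).1)
  · intro heY
    obtain ⟨x, hxe, hxY⟩ := not_subset.1 heY
    exact ⟨x, mem_inter.2 ⟨hxe, (mem_union.1 (he hxe)).resolve_right hxY⟩⟩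

lemma filter_powersetCard_crossing_eq_sdiff (r : ℕ) {S P Q : Finset α}
    (hSP : Disjoint S P) (hSQ : Disjoint S Q) (hPQ : Disjoint P Q) :
    ((S ∪ P ∪ Q).powersetCard r).filter
        (fun e => (e ∩ P).Nonempty ∧ (e ∩ S).Nonempty ∧ (e ∩ Q).Nonempty) =
      (S ∪ P ∪ Q).powersetCard r \ ((S ∪ P).powersetCard r ∪ (S ∪ Q).powersetCard r ∪
        (P ∪ Q).powersetCard r) := by
  ext e
  simp only [mem_filter, mem_sdiff, mem_union, mem_powersetCard]
  refine and_congr_right fun ⟨he, _⟩ => ?_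
  rw [inter_nonempty_iff_not_subset (he.trans_eq (by ac_rfl))
      (disjoint_union_right.2 ⟨hSP.symm, hPQ⟩),
    inter_nonempty_iff_not_subset (he.trans_eq (by ac_rfl)) (disjoint_union_right.2 ⟨hSP, hSQ⟩),
    inter_nonempty_iff_not_subset (he.trans_eq (by ac_rfl))
      (disjoint_union_right.2 ⟨hSQ.symm, hPQ.symm⟩)]
  tauto

lemma card_powersetCard_filter_crossing {r : ℕ} (hr : r ≠ 0) {S P Q : Finset α}
    (hSP : Disjoint S P) (hSQ : Disjoint S Q) (hPQ : Disjoint P Q) :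
    ((((S ∪ P ∪ Q).powersetCard r).filter
        (fun e => (e ∩ P).Nonempty ∧ (e ∩ S).Nonempty ∧ (e ∩ Q).Nonempty)).card : ℤ) =
      ((S.card + P.card + Q.card).choose r : ℤ) - ((S.card + P.card).choose r : ℤ)
        - ((S.card + Q.card).choose r : ℤ) - ((P.card + Q.card).choose r : ℤ)
        + (S.card.choose r : ℤ) + (P.card.choose r : ℤ) + (Q.card.choose r : ℤ) := by
  have hSPQ : (S ∪ P) ∩ (S ∪ Q) = S := by
    rw [← union_inter_distrib_left, disjoint_iff_inter_eq_empty.1 hPQ, union_empty]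
  have hSPP : (S ∪ P) ∩ (P ∪ Q) = P := by
    rw [union_comm S P, ← union_inter_distrib_left, disjoint_iff_inter_eq_empty.1 hSQ,
      union_empty]
  have hSQQ : (S ∪ Q) ∩ (P ∪ Q) = Q := by
    rw [← inter_union_distrib_right, disjoint_iff_inter_eq_empty.1 hSP, empty_union]
  have hS : S ∩ (P ∪ Q) = ∅ :=
    disjoint_iff_inter_eq_empty.1 (disjoint_union_right.2 ⟨hSP, hSQ⟩)
  have hsub : (S ∪ P).powersetCard r ∪ (S ∪ Q).powersetCard r ∪ (P ∪ Q).powersetCard r ⊆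
      (S ∪ P ∪ Q).powersetCard r := by
    refine union_subset (union_subset ?_ ?_) ?_ <;> exact powersetCard_mono (by grind)
  rw [filter_powersetCard_crossing_eq_sdiff r hSP hSQ hPQ, card_sdiff_union_union hsub,
    powersetCard_inter, powersetCard_inter, powersetCard_inter, powersetCard_inter, hSPQ, hSPP,
    hSQQ, hS,
    (powersetCard_eq_empty (s := (∅ : Finset α))).2 (by simpa [Nat.pos_iff_ne_zero] using hr)]
  simp only [card_powersetCard, card_union_of_disjoint hSP, card_union_of_disjoint hSQ,
    card_union_of_disjoint hPQ, card_union_of_disjoint (disjoint_union_left.2 ⟨hSQ, hPQ⟩),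
    card_empty, Nat.cast_zero]
  ring

end Finset

namespace FinHypergraph

variable {G C H H' K : FinHypergraph} {S P Q X Z e f : Finset ℕ} {p q : ℕ}

lemma isSub_refl (H : FinHypergraph) : H.IsSub H := ⟨subset_rfl, subset_rfl⟩

lemma Adj.symm {u v : ℕ} (h : K.Adj u v) : K.Adj v u :=
  let ⟨e, he, hu, hv⟩ := h
  ⟨e, he, hv, hu⟩

lemma Adj.mono {u v : ℕ} (hK : K.edges ⊆ G.edges) (h : K.Adj u v) : G.Adj u v :=
  let ⟨e, he, hu, hv⟩ := h
  ⟨e, hK he, hu, hv⟩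

lemma reflTransGen_adj_symm {u v : ℕ} (h : Relation.ReflTransGen K.Adj u v) :
    Relation.ReflTransGen K.Adj v u := by
  induction h with
  | refl => exact .refl
  | tail _ hadj ih => exact ih.head hadj.symm

lemma mem_edges_of_mem_addEdge (hf : f ∈ (H.addEdge e).edges) (hfe : f ≠ e) :
    f ∈ H.edges := by
  simp only [addEdge] at hf
  split_ifs at hf
  · exact (mem_insert.1 hf).resolve_left hfe
  · exact hf

lemma exists_isVertexCut_card_eq_kappa (h : ∃ X, K.IsVertexCut X) :
    ∃ X, K.IsVertexCut X ∧ X.card = K.kappa := by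
  rw [kappa, if_pos h]
  obtain ⟨X, hX⟩ := h
  exact Nat.sInf_mem (s := {m | ∃ X, K.IsVertexCut X ∧ X.card = m}) ⟨X.card, X, hX, rfl⟩

lemma kappa_le_card_of_isVertexCut (h : K.IsVertexCut X) : K.kappa ≤ X.card := by
  rw [kappa, if_pos ⟨X, h⟩]
  exact Nat.sInf_le ⟨X, h, rfl⟩

lemma le_kappa_of_isVertexCut {m : ℕ} (hX : K.IsVertexCut X)
    (h : ∀ Y, K.IsVertexCut Y → m ≤ Y.card) : m ≤ K.kappa := by
  obtain ⟨Y, hY, hcard⟩ := exists_isVertexCut_card_eq_kappa ⟨X, hX⟩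
  exact hcard ▸ h Y hY

lemma IsVertexCut.one_lt_card_sdiff (h : K.IsVertexCut X) : 1 < (K.verts \ X).card := by
  by_contra! hle
  refine h.2 fun u hu v hv => ?_
  obtain rfl := card_le_one.1 hle u (mem_inter.1 hu).2 v (mem_inter.1 hv).2
  exact .refl

lemma kappa_le_card_sub_one (K : FinHypergraph) : K.kappa ≤ K.verts.card - 1 := by
  by_cases h : ∃ X, K.IsVertexCut X
  · obtain ⟨X, hX, hcard⟩ := exists_isVertexCut_card_eq_kappa h
    have := hX.one_lt_card_sdiff
    have := card_sdiff_add_card_eq_card hX.1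
    omega
  · rw [kappa, if_neg h]

lemma bddAbove_kappa_of_isSub (H : FinHypergraph) :
    BddAbove {m | ∃ H' : FinHypergraph, H'.IsSub H ∧ H'.kappa = m} := by
  refine ⟨H.verts.card, ?_⟩
  rintro _ ⟨H', hH', rfl⟩
  exact (kappa_le_card_sub_one H').trans ((Nat.sub_le _ _).trans (card_le_card hH'.1))

lemma kappa_le_kappaBar (h : H'.IsSub H) : H'.kappa ≤ H.kappaBar :=
  le_csSup (bddAbove_kappa_of_isSub H) ⟨H', h, rfl⟩

lemma exists_isSub_kappa_eq_kappaBar (H : FinHypergraph) :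
    ∃ H' : FinHypergraph, H'.IsSub H ∧ H'.kappa = H.kappaBar :=
  Nat.sSup_mem (s := {m | ∃ H' : FinHypergraph, H'.IsSub H ∧ H'.kappa = m})
    ⟨H.kappa, H, isSub_refl H, rfl⟩ (bddAbove_kappa_of_isSub H)

lemma isVertexCut_of_forall_subset_or_subset (hZ : Z ⊆ K.verts) (hPQ : Disjoint P Q)
    (hedges : ∀ f ∈ K.edges, f ⊆ K.verts \ Z → f ⊆ P ∨ f ⊆ Q)
    (hp : p ∈ K.verts \ Z) (hpP : p ∈ P) (hq : q ∈ K.verts \ Z) (hqQ : q ∈ Q) :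
    K.IsVertexCut Z := by
  have hreach_P : ∀ x, Relation.ReflTransGen (K.induce (K.verts \ Z)).Adj p x → x ∈ P := by
    intro x hx
    induction hx with
    | refl => exact hpP
    | tail _ hadj ih =>
      obtain ⟨f, hf, hb, hc⟩ := hadj
      obtain ⟨hfK, hfZ⟩ := mem_filter.1 hf
      rcases hedges f hfK hfZ with hfP | hfQ
      · exact hfP hc
      · exact absurd (hfQ hb) (disjoint_left.1 hPQ ih)
  refine ⟨hZ, fun hconn => disjoint_left.1 hPQ (hreach_P q ?_) hqQ⟩
  exact hconn p (mem_inter.2 ⟨(mem_sdiff.1 hp).1, hp⟩) q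
    (mem_inter.2 ⟨(mem_sdiff.1 hq).1, hq⟩)

lemma IsComponent.subset_verts_of_inter_nonempty (hC : IsComponent G C) (hf : f ∈ G.edges)
    (hfC : (f ∩ C.verts).Nonempty) : f ⊆ C.verts := by
  obtain ⟨w, hw⟩ := hfC
  obtain ⟨hwf, hwC⟩ := mem_inter.1 hw
  set C' := hUnion C (G.induce f)
  have hfC' : f ∈ C'.edges := mem_union_right _ (mem_filter.2 ⟨hf, subset_rfl⟩)
  have hreach : ∀ u ∈ C'.verts, Relation.ReflTransGen C'.Adj w u := by
    intro u hu
    rcases mem_union.1 hu with hu | hu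
    · exact Relation.ReflTransGen.mono (fun _ _ => Adj.mono subset_union_left) _ _
        (hC.2.1 w hwC u hu)
    · exact .single ⟨f, hfC', hwf, (mem_inter.1 hu).2⟩
  have hconn : C'.Connected := fun u hu v hv =>
    (reflTransGen_adj_symm (hreach u hu)).trans (hreach v hv)
  have hC' : C' = C := hC.2.2 C' ⟨union_subset hC.1.1 inter_subset_left,
    union_subset hC.1.2 (filter_subset _ _)⟩ hconn ⟨subset_union_left, subset_union_left⟩
  intro x hx
  have hxC' : x ∈ C'.verts := mem_union_right _ (mem_inter.2 ⟨G.edge_sub f hf hx, hx⟩)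
  rwa [hC'] at hxC'

lemma IsComponent.verts_nonempty (hC : IsComponent G C) (hG : G.verts.Nonempty) :
    C.verts.Nonempty := by
  obtain ⟨u, hu⟩ := hG
  by_contra hC0
  rw [not_nonempty_iff_eq_empty] at hC0
  have hCedges : C.edges = ∅ := eq_empty_of_forall_notMem fun e he =>
    (C.edge_nonempty e he).ne_empty (subset_empty.1 (hC0 ▸ C.edge_sub e he))
  have hconn : (G.induce {u}).Connected := by
    intro x hx y hy
    rw [mem_singleton.1 (mem_inter.1 hx).2, mem_singleton.1 (mem_inter.1 hy).2]
  have h := hC.2.2 (G.induce {u}) ⟨inter_subset_left, filter_subset _ _⟩ hconn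
    ⟨hC0 ▸ empty_subset _, hCedges ▸ empty_subset _⟩
  have hu' : u ∈ (G.induce {u}).verts := mem_inter.2 ⟨hu, mem_singleton_self u⟩
  rw [h, hC0] at hu'
  exact notMem_empty u hu'

lemma IsComponent.connected_of_verts_subset (hC : IsComponent G C) (h : G.verts ⊆ C.verts) :
    G.Connected := fun u hu v hv =>
  Relation.ReflTransGen.mono (fun _ _ => Adj.mono hC.1.2) _ _ (hC.2.1 u (h hu) v (h hv))

lemma VertexKMaximal.exists_isSub_addEdge {r k : ℕ} (hH : H.VertexKMaximal r k)
    (heV : e ⊆ H.verts) (hecard : e.card = r) (he : e ∉ H.edges) :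
    ∃ H' : FinHypergraph, H'.IsSub (H.addEdge e) ∧ k + 1 ≤ H'.kappa ∧ e ∈ H'.edges := by
  obtain ⟨H', hH', hkappa⟩ := exists_isSub_kappa_eq_kappaBar (H.addEdge e)
  have hk : k + 1 ≤ H'.kappa := hkappa ▸ hH.2.2 e heV hecard he
  refine ⟨H', hH', hk, ?_⟩
  by_contra heH'
  have hsub : H'.IsSub H := ⟨hH'.1, fun f hf =>
    mem_edges_of_mem_addEdge (hH'.2 hf) (ne_of_mem_of_not_mem hf heH')⟩
  have := kappa_le_kappaBar hsub
  have := hH.2.1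
  omega

structure IsSeparation (H : FinHypergraph) (S P Q : Finset ℕ) : Prop where
  disjoint_left : Disjoint S P
  disjoint_right : Disjoint S Q
  disjoint : Disjoint P Q
  union_eq : S ∪ P ∪ Q = H.verts
  left_nonempty : P.Nonempty
  right_nonempty : Q.Nonempty
  subset_or_subset : ∀ f ∈ H.edges, Disjoint f S → f ⊆ P ∨ f ⊆ Q

namespace IsSeparation

lemma symm (hsep : H.IsSeparation S P Q) : H.IsSeparation S Q P where
  disjoint_left := hsep.disjoint_right
  disjoint_right := hsep.disjoint_left
  disjoint := hsep.disjoint.symm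
  union_eq := by rw [← hsep.union_eq, union_right_comm]
  left_nonempty := hsep.right_nonempty
  right_nonempty := hsep.left_nonempty
  subset_or_subset f hf hfS := (hsep.subset_or_subset f hf hfS).symm

lemma card_verts (hsep : H.IsSeparation S P Q) :
    H.verts.card = S.card + P.card + Q.card := by
  rw [← hsep.union_eq, card_union_of_disjoint (disjoint_union_left.2
    ⟨hsep.disjoint_right, hsep.disjoint⟩), card_union_of_disjoint hsep.disjoint_left]

lemma notMem_of_mem_union (hsep : H.IsSeparation S P Q) {x : ℕ} (hx : x ∈ P ∪ Q) :
    x ∉ S :=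
  Finset.disjoint_right.1 (disjoint_union_right.2 ⟨hsep.disjoint_left, hsep.disjoint_right⟩) hx

/-- Deleting `Z` destroys `e`, so the edges of `H'` that survive are edges of `H - S`, none of
which joins the two sides. -/
lemma isVertexCut_of_isSub_addEdge (hsep : H.IsSeparation S P Q)
    (hH' : H'.IsSub (H.addEdge e)) (hZ : Z ⊆ H'.verts) (hSZ : S ∩ H'.verts ⊆ Z)
    (heZ : (e ∩ Z).Nonempty) (hp : p ∈ H'.verts \ Z) (hpP : p ∈ P)
    (hq : q ∈ H'.verts \ Z) (hqQ : q ∈ Q) : H'.IsVertexCut Z := by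
  refine isVertexCut_of_forall_subset_or_subset hZ hsep.disjoint ?_ hp hpP hq hqQ
  intro f hf hfZ
  have hfe : f ≠ e := by
    rintro rfl
    obtain ⟨x, hx⟩ := heZ
    exact (mem_sdiff.1 (hfZ (mem_inter.1 hx).1)).2 (mem_inter.1 hx).2
  refine hsep.subset_or_subset f (mem_edges_of_mem_addEdge (hH'.2 hf) hfe)
    (Finset.disjoint_left.2 fun x hxf hxS => ?_)
  obtain ⟨hxW, hxZ⟩ := mem_sdiff.1 (hfZ hxf)
  exact hxZ (hSZ (mem_inter.2 ⟨hxS, hxW⟩))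

lemma mem_edges_of_crossing {r k : ℕ} (hH : H.VertexKMaximal r k)
    (hsep : H.IsSeparation S P Q) (hSk : S.card ≤ k) (heV : e ⊆ H.verts) (hecard : e.card = r)
    (heP : (e ∩ P).Nonempty) (heS : (e ∩ S).Nonempty) (heQ : (e ∩ Q).Nonempty) :
    e ∈ H.edges := by
  by_contra he
  obtain ⟨H', hH', hk, heH'⟩ := hH.exists_isSub_addEdge heV hecard he
  have heW := H'.edge_sub e heH'
  obtain ⟨p, hp⟩ := heP
  obtain ⟨z, hz⟩ := heS
  obtain ⟨q, hq⟩ := heQ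
  rw [mem_inter] at hp hz hq
  have hcut : H'.IsVertexCut (S ∩ H'.verts) :=
    hsep.isVertexCut_of_isSub_addEdge hH' inter_subset_right subset_rfl
      ⟨z, mem_inter.2 ⟨hz.1, mem_inter.2 ⟨hz.2, heW hz.1⟩⟩⟩
      (mem_sdiff.2 ⟨heW hp.1, fun h => hsep.notMem_of_mem_union (mem_union_left _ hp.2)
        (mem_inter.1 h).1⟩) hp.2
      (mem_sdiff.2 ⟨heW hq.1, fun h => hsep.notMem_of_mem_union (mem_union_right _ hq.2)
        (mem_inter.1 h).1⟩) hq.2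
  have := kappa_le_card_of_isVertexCut hcut
  have := card_le_card (inter_subset_left : S ∩ H'.verts ⊆ S)
  omega

lemma eq_of_mem_left_of_isSub_addEdge (hsep : H.IsSeparation S P Q)
    (hH' : H'.IsSub (H.addEdge e)) (hk : S.card + 1 < H'.kappa) (heH' : e ∈ H'.edges)
    (hpe : p ∈ e) (hpP : p ∈ P) (hqe : q ∈ e) (hqQ : q ∈ Q) {x : ℕ} (hx : x ∈ H'.verts)
    (hxP : x ∈ P) : x = p := by
  by_contra hxp
  have heW := H'.edge_sub e heH'
  have hqp : q ≠ p := fun h => Finset.disjoint_left.1 hsep.disjoint hpP (h ▸ hqQ)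
  have hxZ : x ∉ insert p (S ∩ H'.verts) := by
    simp [hxp, hsep.notMem_of_mem_union (mem_union_left _ hxP)]
  have hqZ : q ∉ insert p (S ∩ H'.verts) := by
    simp [hqp, hsep.notMem_of_mem_union (mem_union_right _ hqQ)]
  have hcut : H'.IsVertexCut (insert p (S ∩ H'.verts)) :=
    hsep.isVertexCut_of_isSub_addEdge hH' (insert_subset (heW hpe) inter_subset_right)
      (subset_insert _ _) ⟨p, mem_inter.2 ⟨hpe, mem_insert_self _ _⟩⟩
      (mem_sdiff.2 ⟨hx, hxZ⟩) hxP (mem_sdiff.2 ⟨heW hqe, hqZ⟩) hqQ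
  have := kappa_le_card_of_isVertexCut hcut
  have := card_insert_le p (S ∩ H'.verts)
  have := card_le_card (inter_subset_left : S ∩ H'.verts ⊆ S)
  omega

lemma exists_notMem_edges {r : ℕ} (hsep : H.IsSeparation S P Q) (hr : 2 ≤ r)
    (hrPQ : r ≤ P.card + Q.card) : ∃ e p q, e ⊆ H.verts ∧ e.card = r ∧ e ∉ H.edges ∧
      p ∈ e ∧ p ∈ P ∧ q ∈ e ∧ q ∈ Q := by
  obtain ⟨p, hpP⟩ := hsep.left_nonempty
  obtain ⟨q, hqQ⟩ := hsep.right_nonempty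
  have hpq : p ≠ q := fun h => Finset.disjoint_left.1 hsep.disjoint hpP (h ▸ hqQ)
  obtain ⟨e, hpqe, hePQ, hecard⟩ := exists_subsuperset_card_eq (n := r)
    (insert_subset (mem_union_left _ hpP) (singleton_subset_iff.2 (mem_union_right _ hqQ)))
    (by rw [card_pair hpq]; exact hr) (by rwa [card_union_of_disjoint hsep.disjoint])
  have hpe : p ∈ e := hpqe (mem_insert_self _ _)
  have hqe : q ∈ e := hpqe (mem_insert_of_mem (mem_singleton_self _))
  have heV : e ⊆ H.verts := by
    rw [← hsep.union_eq, union_assoc]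
    exact hePQ.trans subset_union_right
  refine ⟨e, p, q, heV, hecard, fun he => ?_, hpe, hpP, hqe, hqQ⟩
  have heS : Disjoint e S := Finset.disjoint_left.2 fun x hx => hsep.notMem_of_mem_union (hePQ hx)
  rcases hsep.subset_or_subset e he heS with h | h
  · exact Finset.disjoint_left.1 hsep.disjoint (h hqe) hqQ
  · exact Finset.disjoint_left.1 hsep.disjoint hpP (h hpe)

lemma le_card {r k : ℕ} (hH : H.VertexKMaximal r k) (hsep : H.IsSeparation S P Q)
    (hr : 2 ≤ r) (hn : k + r ≤ H.verts.card) : k ≤ S.card := by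
  by_contra! hSk
  have := hsep.card_verts
  obtain ⟨e, p, q, heV, hecard, he, hpe, hpP, hqe, hqQ⟩ :=
    hsep.exists_notMem_edges hr (by omega)
  obtain ⟨H', hH', hk, heH'⟩ := hH.exists_isSub_addEdge heV hecard he
  have hk' : S.card + 1 < H'.kappa := by omega
  have hW : H'.verts ⊆ insert p (insert q S) := by
    intro x hx
    have hxV : x ∈ S ∪ P ∪ Q := hsep.union_eq ▸ hH'.1 hx
    rcases mem_union.1 hxV with hxSP | hxQ
    · rcases mem_union.1 hxSP with hxS | hxP
      · exact mem_insert_of_mem (mem_insert_of_mem hxS)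
      · rw [hsep.eq_of_mem_left_of_isSub_addEdge hH' hk' heH' hpe hpP hqe hqQ hx hxP]
        exact mem_insert_self _ _
    · rw [hsep.symm.eq_of_mem_left_of_isSub_addEdge hH' hk' heH' hqe hqQ hpe hpP hx hxQ]
      exact mem_insert_of_mem (mem_insert_self _ _)
  have := kappa_le_card_sub_one H'
  have := card_le_card hW
  have := card_insert_le p (insert q S)
  have := card_insert_le q S
  omega

lemma filter_edges_eq {r k : ℕ} (hH : H.VertexKMaximal r k) (hsep : H.IsSeparation S P Q)
    (hSk : S.card ≤ k) :
    H.edges.filter (fun e => (e ∩ P).Nonempty ∧ (e ∩ S).Nonempty ∧ (e ∩ Q).Nonempty) =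
      (H.verts.powersetCard r).filter
        (fun e => (e ∩ P).Nonempty ∧ (e ∩ S).Nonempty ∧ (e ∩ Q).Nonempty) := by
  ext e
  simp only [mem_filter, mem_powersetCard]
  exact ⟨fun ⟨he, hc⟩ => ⟨⟨H.edge_sub e he, hH.1 e he⟩, hc⟩,
    fun ⟨⟨heV, hec⟩, hc⟩ =>
      ⟨hsep.mem_edges_of_crossing hH hSk heV hec hc.1 hc.2.1 hc.2.2, hc⟩⟩

end IsSeparation

lemma IsSeparationTriple.exists_isSeparation {H1 H2 : FinHypergraph}
    (hsep : H.IsSeparationTriple S H1 H2) :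
    ∃ P Q, H.IsSeparation S P Q ∧ H1.verts = S ∪ P ∧ H2.verts = S ∪ Q := by
  obtain ⟨hcut, -, C1, hC1, rfl, rfl⟩ := hsep
  set G := H.induce (H.verts \ S)
  have hG : G.verts = H.verts \ S := inter_eq_right.2 sdiff_subset
  have hPV : C1.verts ⊆ H.verts \ S := hG ▸ hC1.1.1
  have hSPV : S ∪ C1.verts ⊆ H.verts := union_subset hcut.1 (hPV.trans sdiff_subset)
  refine ⟨C1.verts, H.verts \ (S ∪ C1.verts), ⟨?_, ?_, ?_, ?_, ?_, ?_, ?_⟩, ?_, ?_⟩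
  · exact disjoint_of_subset_right hPV disjoint_sdiff
  · exact disjoint_sdiff.mono_left subset_union_left
  · exact disjoint_sdiff.mono_left subset_union_right
  · exact union_sdiff_of_subset hSPV
  · refine hC1.verts_nonempty (nonempty_iff_ne_empty.2 fun hG0 => hcut.2 fun u hu => ?_)
    exact absurd hu (hG0 ▸ notMem_empty u)
  · refine nonempty_iff_ne_empty.2 fun hQ => hcut.2 (hC1.connected_of_verts_subset ?_)
    intro x hx
    rw [hG] at hx
    by_contra hxP
    obtain ⟨hxV, hxS⟩ := mem_sdiff.1 hx
    exact notMem_empty x (hQ ▸ mem_sdiff.2 ⟨hxV, by simp [hxS, hxP]⟩)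
  · intro f hf hfS
    have hfG : f ∈ G.edges := mem_filter.2 ⟨hf, fun x hx =>
      mem_sdiff.2 ⟨H.edge_sub f hf hx, disjoint_left.1 hfS hx⟩⟩
    by_cases hfP : (f ∩ C1.verts).Nonempty
    · exact .inl (hC1.subset_verts_of_inter_nonempty hfG hfP)
    · refine .inr fun x hx => mem_sdiff.2 ⟨H.edge_sub f hf hx, ?_⟩
      rw [mem_union, not_or]
      exact ⟨disjoint_left.1 hfS hx, fun hxP => hfP ⟨x, mem_inter.2 ⟨hx, hxP⟩⟩⟩
  · exact inter_eq_right.2 hSPV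
  · exact inter_eq_right.2 (union_subset hcut.1 sdiff_subset)

lemma IsSeparationTriple.card_le {r k : ℕ} {H1 H2 : FinHypergraph} (hH : H.VertexKMaximal r k)
    (hsep : H.IsSeparationTriple S H1 H2) : S.card ≤ k :=
  (le_kappa_of_isVertexCut hsep.1 hsep.2.1).trans
    ((kappa_le_kappaBar (isSub_refl H)).trans hH.2.1)

end FinHypergraph

theorem stmt_5_general (n k r : ℕ) (hr : 2 ≤ r) (hn : k + r ≤ n)
    (H : FinHypergraph) (hcard : H.verts.card = n) (hH : H.VertexKMaximal r k)
    (S : Finset ℕ) (H1 H2 : FinHypergraph) (hsep : H.IsSeparationTriple S H1 H2)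
    (n1 n2 : ℕ) (hn1 : H1.verts.card = n1) (hn2 : H2.verts.card = n2) :
    ((H.edges.filter (fun e => (e ∩ (H1.verts \ S)).Nonempty ∧ (e ∩ S).Nonempty ∧
        (e ∩ (H2.verts \ S)).Nonempty)).card : ℤ) =
      (n.choose r : ℤ) - (n1.choose r : ℤ) - (n2.choose r : ℤ) + (k.choose r : ℤ)
        - ((n - k).choose r : ℤ) + ((n1 - k).choose r : ℤ) + ((n2 - k).choose r : ℤ) := by
  obtain ⟨P, Q, hPQ, hH1, hH2⟩ := hsep.exists_isSeparation
  have hSk : S.card = k := le_antisymm (hsep.card_le hH) (hPQ.le_card hH hr (hcard ▸ hn))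
  obtain rfl : n = k + P.card + Q.card := by rw [← hcard, hPQ.card_verts, hSk]
  obtain rfl : n1 = k + P.card := by
    rw [← hn1, hH1, card_union_of_disjoint hPQ.disjoint_left, hSk]
  obtain rfl : n2 = k + Q.card := by
    rw [← hn2, hH2, card_union_of_disjoint hPQ.disjoint_right, hSk]
  rw [hH1, hH2, union_sdiff_cancel_left hPQ.disjoint_left,
    union_sdiff_cancel_left hPQ.disjoint_right, hPQ.filter_edges_eq hH hSk.le, ← hPQ.union_eq,
    card_powersetCard_filter_crossing (by omega) hPQ.disjoint_left hPQ.disjoint_right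
      hPQ.disjoint, hSk]
  simp only [add_assoc, Nat.add_sub_cancel_left]
  ring

/-- With a separation triple `(S, H₁, H₂)` of a vertex-`k`-maximal
`r`-uniform hypergraph `H` on `n` vertices, where `nᵢ = |V(Hᵢ)|`, the number of
edges of `H` meeting all of `V(H₁) - S`, `S` and `V(H₂) - S` equals
`C(n,r) - C(n₁,r) - C(n₂,r) + C(k,r) - C(n-k,r) + C(n₁-k,r) + C(n₂-k,r)`. -/
theorem stmt_5 (n k r : ℕ) (hk : 2 ≤ k) (hr : 2 ≤ r) (hn : k + r ≤ n)
    (H : FinHypergraph) (hcard : H.verts.card = n) (hH : H.VertexKMaximal r k)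
    (S : Finset ℕ) (H1 H2 : FinHypergraph) (hsep : H.IsSeparationTriple S H1 H2)
    (n1 n2 : ℕ) (hn1 : H1.verts.card = n1) (hn2 : H2.verts.card = n2) :
    ((H.edges.filter (fun e => (e ∩ (H1.verts \ S)).Nonempty ∧ (e ∩ S).Nonempty ∧
        (e ∩ (H2.verts \ S)).Nonempty)).card : ℤ) =
      (n.choose r : ℤ) - (n1.choose r : ℤ) - (n2.choose r : ℤ) + (k.choose r : ℤ)
        - ((n - k).choose r : ℤ) + ((n1 - k).choose r : ℤ) + ((n2 - k).choose r : ℤ) :=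
  stmt_5_general n k r hr hn H hcard hH S H1 H2 hsep n1 n2 hn1 hn2
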